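/- Let (X,d) be a compact metric space and T : X → X a continuous map. Then the spanning numbers of the induced hyperspace map are bounded in n for every scale if and only if the spanning numbers of T are: (for every ε > 0 there exists C > 0 with Span(T_K, n, ε) ≤ C for all n) if and only if (for every ε > 0 there exists C > 0 with Span(T, n, ε) ≤ C for all n). (Equivalently, the generalized entropy o(T_K) equals the class ⟦0⟧ of constant sequences if and only if o(T) = ⟦0⟧.) -/

import Mathlib

/-!
Comparing a point `x` with the singleton `{x}`, and a compact set with any of its points, turns an
`(n,ε)`-spanning family of compact sets into an `(n,ε)`-spanning set of points of the same size,
so `Span(T,n,ε) ≤ Span(T_K,n,ε)`. Conversely, if `E` is `(n,ε/2)`-spanning for `T`, every compact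
`W` is `(n,ε)`-close in the Hausdorff metric to the subset of `E` shadowing its points, so the
`2^|E|` subsets of `E` span `T_K` and `Span(T_K,n,ε) ≤ 2^Span(T,n,ε/2)`.
-/

open Metric Filter TopologicalSpace MeasureTheory Set

namespace Paper

variable {α : Type*}

/-- `A` is `(n,ε)`-separated for the iterates of `S`, w.r.t. the distance function `D`. -/
def IsSep (D : α → α → ℝ) (S : α → α) (n : ℕ) (ε : ℝ) (A : Set α) : Prop :=
  ∀ x ∈ A, ∀ y ∈ A, x ≠ y → ∃ i < n, ε ≤ D (S^[i] x) (S^[i] y)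

/-- `Sep(S,n,ε)`: maximal cardinality of an `(n,ε)`-separated set. -/
noncomputable def sep (D : α → α → ℝ) (S : α → α) (n : ℕ) (ε : ℝ) : ℕ :=
  sSup {k | ∃ A : Finset α, A.card = k ∧ IsSep D S n ε ↑A}

/-- `E` is `(n,ε)`-spanning for the iterates of `S`, w.r.t. the distance function `D`. -/
def IsSpan (D : α → α → ℝ) (S : α → α) (n : ℕ) (ε : ℝ) (E : Finset α) : Prop :=
  ∀ x : α, ∃ y ∈ E, ∀ i < n, D (S^[i] x) (S^[i] y) < ε

/-- `Span(S,n,ε)`: minimal cardinality of an `(n,ε)`-spanning set. -/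
noncomputable def span (D : α → α → ℝ) (S : α → α) (n : ℕ) (ε : ℝ) : ℕ :=
  sInf {k | ∃ E : Finset α, E.card = k ∧ IsSpan D S n ε E}

variable {X : Type*} [MetricSpace X]

/-- The induced hyperspace map `T_K` on nonempty compact (= closed, for `X` compact) subsets. -/
noncomputable def indK (T : X → X) (hT : Continuous T) :
    NonemptyCompacts X → NonemptyCompacts X :=
  fun W => ⟨⟨T '' ↑W, W.isCompact.image hT⟩, W.nonempty.image T⟩

variable [MeasurableSpace X] [BorelSpace X]

/-- The measure-induced (push-forward) map `T_*` on Borel probability measures. -/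
noncomputable def push (T : X → X) (hT : Continuous T) :
    ProbabilityMeasure X → ProbabilityMeasure X :=
  fun μ => ⟨(μ : Measure X).map T, Measure.isProbabilityMeasure_map hT.measurable.aemeasurable⟩

/-- The (one-sided) Lévy–Prokhorov metric
`ρ(μ,ν) = inf {δ > 0 | μ(A) ≤ ν(A_δ) + δ for all Borel A}`. -/
noncomputable def prokhorov (μ ν : ProbabilityMeasure X) : ℝ :=
  sInf {δ : ℝ | 0 < δ ∧ ∀ A : Set X, MeasurableSet A →
    (μ A : ℝ) ≤ (ν (Metric.thickening δ A) : ℝ) + δ}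

end Paper

namespace Paper

section Span

variable {α β : Type*}

theorem span_le_card {D : α → α → ℝ} {S : α → α} {n : ℕ} {ε : ℝ} {E : Finset α}
    (h : IsSpan D S n ε E) : span D S n ε ≤ E.card :=
  Nat.sInf_le ⟨E, rfl, h⟩

theorem exists_isSpan_card_eq_span {D : α → α → ℝ} {S : α → α} {n : ℕ} {ε : ℝ}
    (h : ∃ E : Finset α, IsSpan D S n ε E) :
    ∃ E : Finset α, E.card = span D S n ε ∧ IsSpan D S n ε E :=
  Nat.sInf_mem (s := {k | ∃ E : Finset α, E.card = k ∧ IsSpan D S n ε E})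
    (let ⟨E, hE⟩ := h; ⟨E.card, E, rfl, hE⟩)

theorem span_le_of_forall_isSpan {D : α → α → ℝ} {S : α → α} {D' : β → β → ℝ} {S' : β → β}
    {n n' : ℕ} {ε ε' : ℝ} {f : ℕ → ℕ} (hex : ∃ E : Finset α, IsSpan D S n ε E)
    (h : ∀ E : Finset α, IsSpan D S n ε E →
      ∃ E' : Finset β, E'.card ≤ f E.card ∧ IsSpan D' S' n' ε' E') :
    span D' S' n' ε' ≤ f (span D S n ε) := by
  obtain ⟨E, hEcard, hE⟩ := exists_isSpan_card_eq_span hex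
  obtain ⟨E', hE'card, hE'⟩ := h E hE
  exact (span_le_card hE').trans (hEcard ▸ hE'card)

theorem exists_isSpan [PseudoMetricSpace α] [CompactSpace α] {S : α → α} (hS : Continuous S)
    (n : ℕ) {ε : ℝ} (hε : 0 < ε) : ∃ E : Finset α, IsSpan dist S n ε E := by
  let U : α → Set α := fun y => ⋂ i ∈ Finset.range n, {x | dist (S^[i] x) (S^[i] y) < ε}
  have hU : ∀ y, IsOpen (U y) := fun y => isOpen_biInter_finset fun i _ =>
    isOpen_lt ((hS.iterate i).dist continuous_const) continuous_const
  have hcover : univ ⊆ ⋃ y, U y := fun x _ =>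
    mem_iUnion.2 ⟨x, mem_iInter₂.2 fun i _ => by simpa using hε⟩
  obtain ⟨E, hE⟩ := isCompact_univ.elim_finite_subcover U hU hcover
  refine ⟨E, fun x => ?_⟩
  obtain ⟨y, hy, hxy⟩ := mem_iUnion₂.1 (hE (mem_univ x))
  exact ⟨y, hy, fun i hi => mem_iInter₂.1 hxy i (Finset.mem_range.2 hi)⟩

end Span

theorem dist_le_hausdorffDist_singleton {α : Type*} [PseudoMetricSpace α] {x y : α}
    {s : Set α} (hy : y ∈ s) (hs : Bornology.IsBounded s) : dist x y ≤ hausdorffDist {x} s := by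
  rw [dist_comm, ← infDist_singleton, hausdorffDist_comm]
  exact infDist_le_hausdorffDist_of_mem hy <| hausdorffEDist_ne_top_of_nonempty_of_bounded
    ⟨y, hy⟩ (singleton_nonempty x) hs Bornology.isBounded_singleton

section Hyperspace

variable {X : Type*} [MetricSpace X] {T : X → X} (hT : Continuous T)

theorem coe_indK_iterate (i : ℕ) (W : NonemptyCompacts X) :
    (((indK T hT)^[i] W : NonemptyCompacts X) : Set X) = T^[i] '' W := by
  induction i with
  | zero => simp
  | succ i ih =>
    rw [Function.iterate_succ_apply', Function.iterate_succ', Set.image_comp, ← ih]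
    rfl

theorem exists_isSpan_of_isSpan_indK {n : ℕ} {ε : ℝ} {𝓔 : Finset (NonemptyCompacts X)}
    (h : IsSpan dist (indK T hT) n ε 𝓔) :
    ∃ E : Finset X, E.card ≤ 𝓔.card ∧ IsSpan dist T n ε E := by
  classical
  refine ⟨𝓔.image (·.nonempty.some), Finset.card_image_le, fun x => ?_⟩
  obtain ⟨W, hW, hxW⟩ := h {x}
  refine ⟨W.nonempty.some, Finset.mem_image_of_mem _ hW, fun i hi => ?_⟩
  calc dist (T^[i] x) (T^[i] W.nonempty.some)
      ≤ hausdorffDist {T^[i] x} (T^[i] '' W) :=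
        dist_le_hausdorffDist_singleton (mem_image_of_mem _ W.nonempty.some_mem)
          (W.isCompact.image (hT.iterate i)).isBounded
    _ < ε := by
        simpa only [NonemptyCompacts.dist_eq, coe_indK_iterate, NonemptyCompacts.coe_singleton,
          image_singleton] using hxW i hi

theorem exists_isSpan_indK_of_isSpan {n : ℕ} {δ ε : ℝ} (hδ : 0 ≤ δ) (hδε : δ < ε) {E : Finset X}
    (h : IsSpan dist T n δ E) :
    ∃ 𝓔 : Finset (NonemptyCompacts X), 𝓔.card ≤ 2 ^ E.card ∧ IsSpan dist (indK T hT) n ε 𝓔 := by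
  classical
  let ofFinset : {F : Finset X // F.Nonempty} → NonemptyCompacts X :=
    fun F => ⟨⟨F.1, F.1.finite_toSet.isCompact⟩, F.1.coe_nonempty.2 F.2⟩
  refine ⟨(E.powerset.subtype Finset.Nonempty).image ofFinset, ?_, fun W => ?_⟩
  · calc _ ≤ (E.powerset.subtype Finset.Nonempty).card := Finset.card_image_le
      _ ≤ E.powerset.card := by rw [Finset.card_subtype]; exact Finset.card_filter_le _ _
      _ = 2 ^ E.card := Finset.card_powerset E
  -- Along the first `n` iterates, `W` stays `δ`-close to the points of `E` that shadow part of it.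
  let F := E.filter fun y => ∃ x ∈ W, ∀ i < n, dist (T^[i] x) (T^[i] y) < δ
  have hF : F.Nonempty := by
    obtain ⟨x, hx⟩ := W.nonempty
    obtain ⟨y, hy, hxy⟩ := h x
    exact ⟨y, Finset.mem_filter.2 ⟨hy, x, hx, hxy⟩⟩
  refine ⟨ofFinset ⟨F, hF⟩, Finset.mem_image_of_mem _ ?_, fun i hi => ?_⟩
  · exact Finset.mem_subtype.2 (Finset.mem_powerset.2 (Finset.filter_subset _ _))
  rw [NonemptyCompacts.dist_eq, coe_indK_iterate, coe_indK_iterate]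
  refine lt_of_le_of_lt (hausdorffDist_le_of_mem_dist hδ ?_ ?_) hδε
  · rintro _ ⟨x, hx, rfl⟩
    obtain ⟨y, hy, hxy⟩ := h x
    exact ⟨T^[i] y, mem_image_of_mem _ (Finset.mem_filter.2 ⟨hy, x, hx, hxy⟩), (hxy i hi).le⟩
  · rintro _ ⟨y, hy, rfl⟩
    obtain ⟨-, x, hx, hxy⟩ := Finset.mem_filter.1 hy
    exact ⟨T^[i] x, mem_image_of_mem _ hx, (dist_comm _ _).trans_le (hxy i hi).le⟩

variable [CompactSpace X]

theorem span_le_span_indK (n : ℕ) {ε : ℝ} (hε : 0 < ε) :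
    span dist T n ε ≤ span dist (indK T hT) n ε := by
  obtain ⟨E, hE⟩ := exists_isSpan hT n (half_pos hε)
  obtain ⟨𝓔, -, h𝓔⟩ := exists_isSpan_indK_of_isSpan hT (half_pos hε).le (half_lt_self hε) hE
  exact span_le_of_forall_isSpan (f := id) ⟨𝓔, h𝓔⟩ fun _ => exists_isSpan_of_isSpan_indK hT

theorem span_indK_le_two_pow (n : ℕ) {ε : ℝ} (hε : 0 < ε) :
    span dist (indK T hT) n ε ≤ 2 ^ span dist T n (ε / 2) :=
  span_le_of_forall_isSpan (exists_isSpan hT n (half_pos hε)) fun _ =>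
    exists_isSpan_indK_of_isSpan hT (half_pos hε).le (half_lt_self hε)

end Hyperspace

end Paper

open Paper in
/-- The spanning numbers of `T_K` are bounded in `n` at every scale iff those
of `T` are; equivalently `o(T_K) = ⟦0⟧ ↔ o(T) = ⟦0⟧`. -/
theorem induced_hyperspace_bounded_iff_base_bounded
    {X : Type*} [MetricSpace X] [CompactSpace X] (T : X → X) (hT : Continuous T) :
    (∀ ε > (0 : ℝ), ∃ C > (0 : ℝ), ∀ n : ℕ, (span dist (indK T hT) n ε : ℝ) ≤ C) ↔
    (∀ ε > (0 : ℝ), ∃ C > (0 : ℝ), ∀ n : ℕ, (span dist T n ε : ℝ) ≤ C) := by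
  constructor
  · intro hK ε hε
    obtain ⟨C, hC, hbound⟩ := hK ε hε
    exact ⟨C, hC, fun n => (Nat.cast_le.2 (span_le_span_indK hT n hε)).trans (hbound n)⟩
  · intro hbase ε hε
    obtain ⟨C, -, hbound⟩ := hbase (ε / 2) (half_pos hε)
    refine ⟨2 ^ C, by positivity, fun n => ?_⟩
    calc (span dist (indK T hT) n ε : ℝ) ≤ (2 : ℝ) ^ (span dist T n (ε / 2) : ℝ) := by
          rw [Real.rpow_natCast]; exact_mod_cast span_indK_le_two_pow hT n hε
      _ ≤ 2 ^ C := Real.rpow_le_rpow_of_exponent_le one_le_two (hbound n)
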